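/- Ochsenschläger's theorem (second part): let φ be the Thue–Morse morphism. For all k ≥ 1, φ^k(0) is not (k+1)-binomially equivalent to φ^k(1); more precisely, binom(φ^k(0), 0 1^k) − binom(φ^k(1), 0 1^k) = 2^{(k-1)(k-2)/2} for k ≥ 1. -/

import Mathlib

/-- Number of occurrences of the second word as a (scattered) subword of the first. -/
def binom {α : Type*} [DecidableEq α] : List α → List α → ℕ
  | _, [] => 1
  | [], _ :: _ => 0
  | a :: u, b :: v => binom u (b :: v) + if a = b then binom u v else 0

/-- k-binomial equivalence. -/
def BinEq (k : ℕ) (u v : List Bool) : Prop :=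
  ∀ x : List Bool, x.length ≤ k → binom u x = binom v x

/-- The Thue–Morse word: `tm n` is the parity of the number of ones
in the binary expansion of `n` (`false` plays the role of the letter 0). -/
def tm (n : ℕ) : Bool := (Nat.digits 2 n).count 1 % 2 == 1

/-- `u` occurs as a (contiguous) factor of the Thue–Morse word. -/
def isFactorTM (u : List Bool) : Prop :=
  ∃ i : ℕ, u = (List.range u.length).map (fun j => tm (i + j))

/-- The Thue–Morse morphism φ(0)=01, φ(1)=10, extended to words. -/
def phiW (w : List Bool) : List Bool :=
  w.flatMap (fun a => if a then [true, false] else [false, true])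

/-! Put `u = φ^k(0)`, `v = φ^k(1)`, so that `φ^{k+1}(0) = uv` and `φ^{k+1}(1) = vu`. Cutting an
occurrence of `0 1^j` in `xy` at its `0` gives
`binom(xy, 0 1^j) = binom(y, 0 1^j) + Σ_{i ≤ j} binom(x, 0 1^i) C(|y|_1, j - i)`,
so if `|x|_1 = |y|_1 = c` and `d(i) = binom(x, 0 1^i) - binom(y, 0 1^i)`, then
`binom(xy, 0 1^j) - binom(yx, 0 1^j) = Σ_{i < j} d(i) C(c, j - i)`.
For `x = u`, `y = v` we have `c = 2^(k-1)`, and by induction on `k` the difference for `φ^k` vanishes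
for `j < k`; so for `φ^{k+1}` it vanishes for `j ≤ k`, and at `j = k + 1` only the term `i = k`
survives, which multiplies the previous value by `C(2^(k-1), 1) = 2^(k-1)`. -/

lemma binom_nil_right {α : Type*} [DecidableEq α] (u : List α) : binom u [] = 1 := by
  cases u <;> rfl

lemma binom_append {α : Type*} [DecidableEq α] (u v x : List α) :
    binom (u ++ v) x =
      ∑ i ∈ Finset.range (x.length + 1), binom u (x.take i) * binom v (x.drop i) := by
  induction u generalizing x with
  | nil =>
    cases x with
    | nil => simp [binom_nil_right]
    | cons b y => simp [Finset.sum_range_succ', binom, binom_nil_right]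
  | cons a u ih =>
    cases x with
    | nil => simp [binom_nil_right]
    | cons b y =>
      simp only [List.cons_append, binom, ih, List.length_cons]
      rw [Finset.sum_range_succ' _ (y.length + 1), Finset.sum_range_succ' _ (y.length + 1)]
      by_cases h : a = b
      · simp [h, binom_nil_right, binom, add_mul, Finset.sum_add_distrib]
        ring
      · simp [h, binom_nil_right, binom]

lemma binom_replicate {α : Type*} [DecidableEq α] (w : List α) (b : α) (j : ℕ) :
    binom w (List.replicate j b) = (w.count b).choose j := by
  induction w generalizing j with
  | nil => cases j <;> simp [List.replicate_succ, binom, binom_nil_right]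
  | cons a w ih =>
    cases j with
    | zero => simp [binom_nil_right]
    | succ j =>
      rw [List.replicate_succ, binom, ← List.replicate_succ, ih, ih, List.count_cons]
      by_cases h : a = b <;> simp [h, Nat.choose_succ_succ', add_comm]

lemma phiW_append (u v : List Bool) : phiW (u ++ v) = phiW u ++ phiW v :=
  List.flatMap_append

lemma iterate_phiW_append (k : ℕ) (u v : List Bool) :
    phiW^[k] (u ++ v) = phiW^[k] u ++ phiW^[k] v := by
  induction k generalizing u v with
  | zero => rfl
  | succ k ih => simp only [Function.iterate_succ_apply, phiW_append, ih]

lemma iterate_succ_phiW (k : ℕ) (b : Bool) :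
    phiW^[k + 1] [b] = phiW^[k] [b] ++ phiW^[k] [!b] := by
  rw [Function.iterate_succ_apply, ← iterate_phiW_append]
  cases b <;> rfl

lemma count_phiW (w : List Bool) (b : Bool) : (phiW w).count b = w.length := by
  induction w with
  | nil => rfl
  | cons a w ih =>
    rw [← List.singleton_append, phiW_append, List.count_append, ih]
    cases a <;> cases b <;> simp [phiW, add_comm]

lemma length_phiW (w : List Bool) : (phiW w).length = 2 * w.length := by
  rw [← List.count_true_add_count_false, count_phiW, count_phiW, two_mul]

lemma length_iterate_phiW (k : ℕ) (b : Bool) : (phiW^[k] [b]).length = 2 ^ k := by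
  induction k with
  | zero => rfl
  | succ k ih => rw [Function.iterate_succ_apply', length_phiW, ih, pow_succ']

lemma count_iterate_succ_phiW (k : ℕ) (b c : Bool) : (phiW^[k + 1] [b]).count c = 2 ^ k := by
  rw [Function.iterate_succ_apply', count_phiW, length_iterate_phiW]

def zeroOnes (j : ℕ) : List Bool := false :: List.replicate j true

lemma binom_append_zeroOnes (x y : List Bool) (j : ℕ) :
    binom (x ++ y) (zeroOnes j) = binom y (zeroOnes j) +
      ∑ i ∈ Finset.range (j + 1), binom x (zeroOnes i) * (y.count true).choose (j - i) := by
  rw [binom_append, zeroOnes, List.length_cons, List.length_replicate, Finset.sum_range_succ',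
    add_comm]
  simp only [List.take_zero, List.drop_zero, binom_nil_right, one_mul, List.take_succ_cons,
    List.drop_succ_cons, List.take_replicate, List.drop_replicate, binom_replicate]
  congr 1
  refine Finset.sum_congr rfl fun i hi => ?_
  rw [min_eq_left (by grind), zeroOnes]

lemma binom_zeroOnes_append_sub_append_swap (x y : List Bool)
    (hc : x.count true = y.count true) (j : ℕ) :
    (binom (x ++ y) (zeroOnes j) : ℤ) - binom (y ++ x) (zeroOnes j) =
      ∑ i ∈ Finset.range j,
        ((binom x (zeroOnes i) : ℤ) - binom y (zeroOnes i)) * (x.count true).choose (j - i) := by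
  rw [binom_append_zeroOnes, binom_append_zeroOnes, hc]
  push_cast
  simp only [Finset.sum_range_succ, Nat.sub_self, Nat.choose_zero_right, sub_mul,
    Finset.sum_sub_distrib]
  ring

def tmDiff (k j : ℕ) : ℤ :=
  binom (phiW^[k] [false]) (zeroOnes j) - binom (phiW^[k] [true]) (zeroOnes j)

lemma tmDiff_succ_succ (k j : ℕ) :
    tmDiff (k + 2) j = ∑ i ∈ Finset.range j, tmDiff (k + 1) i * (2 ^ k).choose (j - i) := by
  rw [tmDiff, iterate_succ_phiW, iterate_succ_phiW (k + 1) true, Bool.not_false, Bool.not_true,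
    binom_zeroOnes_append_sub_append_swap _ _
      (by rw [count_iterate_succ_phiW, count_iterate_succ_phiW]),
    count_iterate_succ_phiW]
  rfl

lemma tmDiff_eq (k j : ℕ) (hj : j ≤ k + 1) :
    tmDiff (k + 1) j = if j = k + 1 then 2 ^ k.choose 2 else 0 := by
  induction k generalizing j with
  | zero => interval_cases j <;> decide
  | succ k ih =>
    have hsum : tmDiff (k + 2) j =
        ∑ i ∈ Finset.range j,
          if k + 1 = i then 2 ^ k.choose 2 * ((2 ^ k).choose (j - i) : ℤ) else 0 := by
      rw [tmDiff_succ_succ]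
      refine Finset.sum_congr rfl fun i hi => ?_
      rw [ih i (by grind), ite_mul, zero_mul]
      simp only [eq_comm]
    rw [hsum, Finset.sum_ite_eq]
    by_cases hjk : j = k + 2
    · subst hjk
      rw [if_pos (by simp), if_pos rfl, show k + 2 - (k + 1) = 1 by omega, Nat.choose_one_right,
        Nat.choose_succ_succ', Nat.choose_one_right, pow_add, mul_comm]
      push_cast
      ring
    · rw [if_neg (by simp; omega), if_neg hjk]

theorem ochsenschlaeger_second (k : ℕ) (hk : 1 ≤ k) :
    ¬ BinEq (k + 1) (phiW^[k] [false]) (phiW^[k] [true]) ∧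
    binom (phiW^[k] [false]) (false :: List.replicate k true) =
      binom (phiW^[k] [true]) (false :: List.replicate k true) +
        2 ^ ((k - 1) * (k - 2) / 2) := by
  obtain ⟨k, rfl⟩ := Nat.exists_eq_add_of_le' hk
  have hdiff : tmDiff (k + 1) (k + 1) = 2 ^ k.choose 2 := by
    rw [tmDiff_eq k (k + 1) le_rfl, if_pos rfl]
  have hexp : (k + 1 - 1) * (k + 1 - 2) / 2 = k.choose 2 := by
    rw [Nat.choose_two_right, Nat.add_sub_cancel, Nat.add_sub_add_right]
  have hbinom : binom (phiW^[k + 1] [false]) (zeroOnes (k + 1)) =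
      binom (phiW^[k + 1] [true]) (zeroOnes (k + 1)) + 2 ^ k.choose 2 := by
    rw [tmDiff] at hdiff
    zify
    linarith
  rw [hexp]
  refine ⟨fun hbin => ?_, hbinom⟩
  have hpos : 0 < 2 ^ k.choose 2 := by positivity
  have := hbin (zeroOnes (k + 1)) (by simp [zeroOnes])
  omega
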